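/- arXiv:2505.18316 — 3 statements merged into one kernel-verified Lean document; each statement's English description precedes it below -/
import Mathlib

section
/- Let G be a finite group, F a field, D a simple FG-module with Ext^1_{FG}(D, D) ≠ 0, and let M be an FG-module with simple socle isomorphic to D and such that Ext^1_{FG}(D, M) = 0 (for instance from a long exact sequence argument). Then there exists a submodule V of M which is uniserial of length 2 with both composition factors isomorphic to D. -/
set_option maxHeartbeats 1000000
set_option synthInstance.maxHeartbeats 400000
open CategoryTheory

lemma isZero_iff_subsingleton (X : ModuleCat.{0} ℤ) :
    Limits.IsZero X ↔ Subsingleton X := by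
  constructor
  · intro h
    haveI : Subsingleton ((forget (ModuleCat ℤ)).obj (ModuleCat.of ℤ PUnit)) :=
      inferInstanceAs (Subsingleton PUnit)
    exact Equiv.subsingleton
      ((forget (ModuleCat ℤ)).mapIso (h.iso (ModuleCat.isZero_of_subsingleton (ModuleCat.of ℤ PUnit)))).toEquiv
  · intro h
    exact ModuleCat.isZero_of_subsingleton _

variable {R : Type} [Ring R]

lemma core {D M : Type} [AddCommGroup D] [Module R D] [AddCommGroup M] [Module R M]
    (g : D →ₗ[R] M) (hg : Function.Injective g)
    (hext : Nontrivial (((Ext ℤ (ModuleCat R) 1).obj (Opposite.op (ModuleCat.of R D))).obj (ModuleCat.of R D)))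
    (hextM : Subsingleton (((Ext ℤ (ModuleCat R) 1).obj (Opposite.op (ModuleCat.of R D))).obj (ModuleCat.of R M)))
    (S : Submodule R M) (hrange : LinearMap.range g = S) :
    ∃ f : D →ₗ[R] (M ⧸ S), f ≠ 0 := by
  classical
  subst hrange
  obtain ⟨P⟩ : Nonempty (ProjectiveResolution (ModuleCat.of R D)) := HasProjectiveResolution.out
  -- M side: every cocycle is a coboundary
  have hMexact : (P.complex.linearYonedaObj ℤ (ModuleCat.of R M)).ExactAt 1 := by
    rw [HomologicalComplex.exactAt_iff_isZero_homology, isZero_iff_subsingleton]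
    haveI : Subsingleton ((forget (ModuleCat ℤ)).obj
        (((Ext ℤ (ModuleCat R) 1).obj (Opposite.op (ModuleCat.of R D))).obj (ModuleCat.of R M))) := hextM
    exact Equiv.subsingleton
      ((forget (ModuleCat ℤ)).mapIso (P.isoExt (R := ℤ) 1 (ModuleCat.of R M))).toEquiv.symm
  have hM : ∀ c : P.complex.X 1 ⟶ ModuleCat.of R M, P.complex.d 2 1 ≫ c = 0 →
      ∃ v : P.complex.X 0 ⟶ ModuleCat.of R M, P.complex.d 1 0 ≫ v = c := by
    rw [HomologicalComplex.exactAt_iff' _ 0 1 2 (by simp) (by simp),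
      ShortComplex.moduleCat_exact_iff] at hMexact
    intro c hc
    obtain ⟨v, hv⟩ := hMexact c (by
      exact hc)
    exact ⟨v, hv⟩
  -- D side: some cocycle is not a coboundary
  have hDnot : ¬ (P.complex.linearYonedaObj ℤ (ModuleCat.of R D)).ExactAt 1 := by
    rw [HomologicalComplex.exactAt_iff_isZero_homology, isZero_iff_subsingleton]
    intro h
    have hs : Subsingleton (((Ext ℤ (ModuleCat R) 1).obj (Opposite.op (ModuleCat.of R D))).obj (ModuleCat.of R D)) :=
      Equiv.subsingleton ((forget (ModuleCat ℤ)).mapIso (P.isoExt (R := ℤ) 1 (ModuleCat.of R D))).toEquiv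
    exact not_subsingleton_iff_nontrivial.mpr hext hs
  have hD : ∃ c : P.complex.X 1 ⟶ ModuleCat.of R D, P.complex.d 2 1 ≫ c = 0 ∧
      ∀ u : P.complex.X 0 ⟶ ModuleCat.of R D, P.complex.d 1 0 ≫ u ≠ c := by
    rw [HomologicalComplex.exactAt_iff' _ 0 1 2 (by simp) (by simp),
      ShortComplex.moduleCat_exact_iff] at hDnot
    push_neg at hDnot
    obtain ⟨c, hc, hnb⟩ := hDnot
    refine ⟨c, ?_, ?_⟩
    · exact hc
    · intro u hu
      exact hnb u hu
  obtain ⟨c, hc2, hcnb⟩ := hD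
  -- push the cocycle into M
  have hgc : P.complex.d 2 1 ≫ (c ≫ ModuleCat.ofHom g) = 0 := by
    rw [← Category.assoc, hc2, Limits.zero_comp]
  obtain ⟨v, hv⟩ := hM (c ≫ ModuleCat.ofHom g) hgc
  -- exactness of the resolution at 0
  set ε : (P.complex.X 0 : Type) →ₗ[R] D := (P.π.f 0).hom with hε_def
  have hεsurj : Function.Surjective ε :=
    (ModuleCat.epi_iff_surjective (P.π.f 0)).mp inferInstance
  have hker : LinearMap.range (P.complex.d 1 0).hom = LinearMap.ker ε :=
    P.exact₀.moduleCat_range_eq_ker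
  -- the map w : X0 → M/range g
  set w : P.complex.X 0 →ₗ[R] (M ⧸ LinearMap.range g) :=
    (LinearMap.range g).mkQ.comp v.hom with hw_def
  have hwd : ∀ x : P.complex.X 1, w (P.complex.d 1 0 x) = 0 := by
    intro x
    have : v (P.complex.d 1 0 x) = g (c x) := by
      have := congrArg (fun φ => φ x) hv
      simpa using this
    simp only [hw_def, LinearMap.comp_apply, this, Submodule.mkQ_apply,
      Submodule.Quotient.mk_eq_zero]
    exact ⟨c x, rfl⟩
  have hle : LinearMap.ker ε ≤ LinearMap.ker w := by
    rw [← hker]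
    rintro x ⟨y, rfl⟩
    exact hwd y
  set e0 := LinearMap.quotKerEquivOfSurjective ε hεsurj with he0_def
  set f : D →ₗ[R] (M ⧸ LinearMap.range g) :=
    (Submodule.liftQ (LinearMap.ker ε) w hle).comp (e0.symm.toLinearMap) with hf_def
  refine ⟨f, ?_⟩
  intro hf0
  -- f = 0 means w = 0, i.e. v lands in range g
  have hw0 : ∀ x : P.complex.X 0, w x = 0 := by
    intro x
    have h1 : f (ε x) = w x := by
      have : e0.symm (ε x) = Submodule.Quotient.mk x := by
        apply e0.injective
        simp [e0, LinearMap.quotKerEquivOfSurjective]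
      rw [hf_def]
      simp only [LinearMap.comp_apply, LinearEquiv.coe_coe]
      rw [this]
      simp [Submodule.liftQ_apply]
    rw [hf0] at h1
    simpa using h1.symm
  have hvr : ∀ x : P.complex.X 0, v x ∈ LinearMap.range g := by
    intro x
    have := hw0 x
    simpa [hw_def, Submodule.Quotient.mk_eq_zero] using this
  -- build u with g ∘ u = v
  set gE := LinearEquiv.ofInjective g hg
  set u : P.complex.X 0 →ₗ[R] D :=
    (gE.symm : LinearMap.range g →ₗ[R] D).comp
      (v.hom.codRestrict (LinearMap.range g) hvr) with hu_def
  have hgu : ∀ x, g (u x) = v x := by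
    intro x
    have : (gE (u x) : M) = v x := by
      simp only [hu_def, LinearMap.comp_apply, LinearEquiv.coe_coe,
        LinearEquiv.apply_symm_apply]
      rfl
    exact this
  refine hcnb (ModuleCat.ofHom u) ?_
  apply ModuleCat.hom_ext
  apply LinearMap.ext
  intro x
  apply hg
  have h2 : v (P.complex.d 1 0 x) = g (c x) := by
    have := congrArg (fun φ => φ x) hv
    simpa using this
  calc g ((P.complex.d 1 0 ≫ ModuleCat.ofHom u) x) = g (u (P.complex.d 1 0 x)) := rfl
    _ = v (P.complex.d 1 0 x) := hgu _
    _ = g (c x) := h2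

lemma inf_eq_bot_or_inf_eq {R M : Type} [Ring R] [AddCommGroup M] [Module R M]
    {W : Submodule R M} (h : IsSimpleModule R ↥W) (U : Submodule R M) :
    U ⊓ W = ⊥ ∨ U ⊓ W = W := by
  haveI := h
  have hmc : Submodule.map W.subtype (Submodule.comap W.subtype U) = W ⊓ U :=
    Submodule.map_comap_subtype _ _
  rcases eq_bot_or_eq_top (Submodule.comap W.subtype U) with h' | h'
  · left
    rw [inf_comm, ← hmc, h', Submodule.map_bot]
  · right
    rw [inf_comm, ← hmc, h', Submodule.map_top, Submodule.range_subtype]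

lemma main {R M D : Type} [Ring R] [AddCommGroup M] [Module R M]
    [AddCommGroup D] [Module R D]
    (hD : IsSimpleModule R D) (S : Submodule R M)
    (hsoc : ∀ N : Submodule R M, IsSimpleModule R ↥N → N ≤ S)
    (eS : ↥S ≃ₗ[R] D) (f : D →ₗ[R] (M ⧸ S)) (hf : f ≠ 0) :
    ∃ (V : Submodule R M) (W : Submodule R V),
        W ≠ ⊥ ∧ W ≠ ⊤ ∧
        (∀ U : Submodule R V, U = ⊥ ∨ U = W ∨ U = ⊤) ∧
        Nonempty (W ≃ₗ[R] D) ∧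
        Nonempty ((V ⧸ W) ≃ₗ[R] D) := by
  classical
  haveI := hD
  haveI : Nontrivial D := IsSimpleModule.nontrivial R D
  have finj : Function.Injective f := by
    rw [← LinearMap.ker_eq_bot]
    rcases eq_bot_or_eq_top (LinearMap.ker f) with h | h
    · exact h
    · exact absurd (LinearMap.ker_eq_top.mp h) hf
  set T := LinearMap.range f with hT_def
  set V := T.comap S.mkQ with hV_def
  have hSV : S ≤ V := by
    intro x hx
    show S.mkQ x ∈ T
    rw [show S.mkQ x = 0 from (Submodule.Quotient.mk_eq_zero S).mpr hx]
    exact T.zero_mem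
  set W : Submodule R V := S.comap V.subtype with hW_def
  have hWmem : ∀ x : V, x ∈ W ↔ (x : M) ∈ S := fun x => Iff.rfl
  set p : V →ₗ[R] (M ⧸ S) := S.mkQ.comp V.subtype with hp_def
  have hkerp : LinearMap.ker p = W := by
    ext x
    simp only [LinearMap.mem_ker, hp_def, LinearMap.comp_apply, Submodule.mkQ_apply,
      Submodule.Quotient.mk_eq_zero]
    exact (hWmem x).symm
  have hrangep : LinearMap.range p = T := by
    apply le_antisymm
    · rintro _ ⟨x, rfl⟩
      exact x.2
    · rintro t ht
      obtain ⟨m, rfl⟩ := S.mkQ_surjective t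
      exact ⟨⟨m, ht⟩, rfl⟩
  have eW : (↥W) ≃ₗ[R] D := (Submodule.comapSubtypeEquivOfLe hSV).trans eS
  have eQ : ((↥V) ⧸ W) ≃ₗ[R] D :=
    (((Submodule.quotEquivOfEq W (LinearMap.ker p) hkerp.symm).trans
      p.quotKerEquivRange).trans (LinearEquiv.ofEq _ _ hrangep)).trans
      (LinearEquiv.ofInjective f finj).symm
  haveI hWs : IsSimpleModule R ↥W := IsSimpleModule.congr eW
  haveI hQs : IsSimpleModule R ((↥V) ⧸ W) := IsSimpleModule.congr eQ
  refine ⟨V, W, ?_, ?_, ?_, ⟨eW⟩, ⟨eQ⟩⟩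
  · -- W ≠ ⊥
    intro h
    haveI : Nontrivial ↥W := IsSimpleModule.nontrivial R ↥W
    rw [h] at this
    obtain ⟨⟨a, ha⟩, ⟨b, hb⟩, hab⟩ := this
    exact hab (Subtype.ext (((Submodule.mem_bot _).mp ha).trans
      ((Submodule.mem_bot _).mp hb).symm))
  · -- W ≠ ⊤
    intro h
    haveI : Nontrivial ((↥V) ⧸ W) := IsSimpleModule.nontrivial R _
    exact not_subsingleton_iff_nontrivial.mpr this
      (Submodule.Quotient.subsingleton_iff.mpr h)
  · -- uniseriality
    intro U
    rcases inf_eq_bot_or_inf_eq hWs U with hUW | hUW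
    · -- U ∩ W = ⊥ : show U = ⊥
      left
      by_contra hU
      rcases eq_bot_or_eq_top (Submodule.map W.mkQ U) with hm | hm
      · apply hU
        have hle : U ≤ W := by
          intro x hx
          have : W.mkQ x ∈ Submodule.map W.mkQ U := Submodule.mem_map_of_mem hx
          rw [hm, Submodule.mem_bot, Submodule.mkQ_apply,
            Submodule.Quotient.mk_eq_zero] at this
          exact this
        rw [← hUW]
        exact le_antisymm (le_inf le_rfl hle) inf_le_left
      · set r : ↥U →ₗ[R] ((↥V) ⧸ W) := W.mkQ.comp U.subtype with hr_def
        have hrinj : Function.Injective r := by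
          rw [← LinearMap.ker_eq_bot]
          ext x
          simp only [LinearMap.mem_ker, hr_def, LinearMap.comp_apply, Submodule.mkQ_apply,
            Submodule.Quotient.mk_eq_zero, Submodule.mem_bot]
          constructor
          · intro hx
            have : (x : ↥V) ∈ U ⊓ W := ⟨x.2, hx⟩
            rw [hUW] at this
            exact Subtype.ext ((Submodule.mem_bot _).mp this)
          · rintro rfl
            exact W.zero_mem
        have hrsurj : Function.Surjective r := by
          intro y
          have : y ∈ Submodule.map W.mkQ U := by rw [hm]; trivial
          obtain ⟨x, hx, rfl⟩ := this
          exact ⟨⟨x, hx⟩, rfl⟩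
        have eU : ↥U ≃ₗ[R] ((↥V) ⧸ W) := LinearEquiv.ofBijective r ⟨hrinj, hrsurj⟩
        haveI hUs : IsSimpleModule R ↥U := IsSimpleModule.congr eU
        haveI hU's : IsSimpleModule R ↥(Submodule.map V.subtype U) :=
          IsSimpleModule.congr (Submodule.equivMapOfInjective V.subtype
            V.injective_subtype U).symm
        have hU'S : Submodule.map V.subtype U ≤ S := hsoc _ hU's
        have hle : U ≤ W := by
          intro x hx
          exact hU'S (Submodule.mem_map_of_mem hx)
        have : U = ⊥ := by
          rw [← hUW]
          exact le_antisymm (le_inf le_rfl hle) inf_le_left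
        exact hU this
    · -- W ≤ U
      have hWU : W ≤ U := by
        rw [← hUW]; exact inf_le_left
      rcases eq_bot_or_eq_top (Submodule.map W.mkQ U) with hm | hm
      · right; left
        have hle : U ≤ W := by
          intro x hx
          have : W.mkQ x ∈ Submodule.map W.mkQ U := Submodule.mem_map_of_mem hx
          rw [hm, Submodule.mem_bot, Submodule.mkQ_apply,
            Submodule.Quotient.mk_eq_zero] at this
          exact this
        exact le_antisymm hle hWU
      · right; right
        have := Submodule.comap_map_mkQ W U
        rw [hm, Submodule.comap_top, sup_eq_right.mpr hWU] at this
        exact this.symm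

/-- Let `G` be a finite group, `F` a field, `D` a simple
`FG`-module with `Ext¹(D, D) ≠ 0`, and `M` an `FG`-module with simple socle
isomorphic to `D` such that `Ext¹(D, M) = 0`.  Then `M` has a submodule `V`
which is uniserial of length `2` with both composition factors isomorphic
to `D`. -/
theorem stmt3 {F G : Type} [Field F] [Group G] [Finite G]
    {D M : Type} [AddCommGroup D] [Module (MonoidAlgebra F G) D]
    [AddCommGroup M] [Module (MonoidAlgebra F G) M]
    (hD : IsSimpleModule (MonoidAlgebra F G) D)
    (hsocsimple : IsSimpleModule (MonoidAlgebra F G)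
      (↥(sSup {N : Submodule (MonoidAlgebra F G) M |
          IsSimpleModule (MonoidAlgebra F G) ↥N})))
    (hsocD : Nonempty
      ((↥(sSup {N : Submodule (MonoidAlgebra F G) M |
          IsSimpleModule (MonoidAlgebra F G) ↥N})) ≃ₗ[MonoidAlgebra F G] D))
    (hext : Nontrivial
      (((Ext ℤ (ModuleCat (MonoidAlgebra F G)) 1).obj
        (Opposite.op (ModuleCat.of (MonoidAlgebra F G) D))).obj
        (ModuleCat.of (MonoidAlgebra F G) D)))
    (hextM : Subsingleton
      (((Ext ℤ (ModuleCat (MonoidAlgebra F G)) 1).obj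
        (Opposite.op (ModuleCat.of (MonoidAlgebra F G) D))).obj
        (ModuleCat.of (MonoidAlgebra F G) M))) :
    ∃ (V : Submodule (MonoidAlgebra F G) M)
      (W : Submodule (MonoidAlgebra F G) V),
        W ≠ ⊥ ∧ W ≠ ⊤ ∧
        (∀ U : Submodule (MonoidAlgebra F G) V, U = ⊥ ∨ U = W ∨ U = ⊤) ∧
        Nonempty (W ≃ₗ[MonoidAlgebra F G] D) ∧
        Nonempty ((V ⧸ W) ≃ₗ[MonoidAlgebra F G] D) := by
  classical
  obtain ⟨eS⟩ := hsocD
  set S : Submodule (MonoidAlgebra F G) M :=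
    sSup {N : Submodule (MonoidAlgebra F G) M |
      IsSimpleModule (MonoidAlgebra F G) ↥N} with hS_def
  set g : D →ₗ[MonoidAlgebra F G] M := S.subtype.comp (eS.symm : D →ₗ[MonoidAlgebra F G] S)
    with hg_def
  have hginj : Function.Injective g := fun a b hab =>
    eS.symm.injective (S.injective_subtype hab)
  have hrange : LinearMap.range g = S := by
    rw [hg_def, LinearMap.range_comp, LinearEquiv.range, Submodule.map_top,
      Submodule.range_subtype]
  obtain ⟨f, hf⟩ := core g hginj hext hextM S hrange
  exact main hD S (fun N hN => le_sSup hN) eS f hf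
end

section
/- Let p ≥ 2, λ a p-regular partition, i a residue mod p, and 0 ≤ r ≤ ε_i(λ). Then the partition ẽ_i^r λ, obtained from λ by removing the bottom r i-normal nodes, is again p-regular. -/
/-- The entry of the `i₀`-signature of the partition `lam` coming from row
`r` (rows indexed from `0`): `some (true, r)` if there is an addable node of
residue `i₀` at the end of row `r`, `some (false, r)` if there is a removable
node of residue `i₀` there, and `none` otherwise.  The node `(r, c)` (with
row and column both `0`-indexed here, so the node in row `r`, column `c`,
counting from `0`) has residue `c - r` computed in `ZMod p` from the
`1`-indexed coordinates `λ_r` and `r + 1`. -/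
def rowEntry (p : ℕ) (i₀ : ZMod p) (lam : ℕ → ℕ) (r : ℕ) : Option (Bool × ℕ) :=
  if (r = 0 ∨ lam r < lam (r - 1)) ∧ ((lam r : ZMod p) + 1 - (r + 1) = i₀) then
    some (true, r)
  else if (lam (r + 1) < lam r) ∧ ((lam r : ZMod p) - (r + 1) = i₀) then
    some (false, r)
  else none

/-- The `i₀`-signature of `lam`, read along the rim from bottom left to top
right, i.e. through the rows `N, N-1, …, 1, 0` (where `lam` vanishes from row
`N` on); `true` stands for `+` (addable), `false` for `-` (removable), and
each sign is recorded together with its row. -/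
def signature (p : ℕ) (i₀ : ZMod p) (lam : ℕ → ℕ) (N : ℕ) : List (Bool × ℕ) :=
  ((List.range (N + 1)).reverse).filterMap (rowEntry p i₀ lam)

/-- One step of the reduction of a signature, processing the signs in reading
order with a stack: a `+` (`true`) cancels against a `-` (`false`) lying
immediately before it. -/
def reduceStep (st : List (Bool × ℕ)) (x : Bool × ℕ) : List (Bool × ℕ) :=
  match x.1, st with
  | true, (false, _) :: rest => rest
  | _, _ => x :: st

/-- The reduced signature, obtained by successively cancelling all
neighbouring pairs `-+`. -/
def reducedSig (s : List (Bool × ℕ)) : List (Bool × ℕ) :=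
  (s.foldl reduceStep []).reverse

/-- The rows of the normal nodes (surviving `-`'s), from bottom to top. -/
def normalRows (p : ℕ) (i₀ : ZMod p) (lam : ℕ → ℕ) (N : ℕ) : List ℕ :=
  ((reducedSig (signature p i₀ lam N)).filter (fun x => x.1 = false)).map
    Prod.snd

/-- The rows of the conormal nodes (surviving `+`'s), from bottom to top. -/
def conormalRows (p : ℕ) (i₀ : ZMod p) (lam : ℕ → ℕ) (N : ℕ) : List ℕ :=
  ((reducedSig (signature p i₀ lam N)).filter (fun x => x.1 = true)).map
    Prod.snd

/-- `ε_{i₀}(λ)`, the number of `i₀`-normal nodes. -/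
def epsNormal (p : ℕ) (i₀ : ZMod p) (lam : ℕ → ℕ) (N : ℕ) : ℕ :=
  (normalRows p i₀ lam N).length

/-- `φ_{i₀}(λ)`, the number of `i₀`-conormal nodes. -/
def phiConormal (p : ℕ) (i₀ : ZMod p) (lam : ℕ → ℕ) (N : ℕ) : ℕ :=
  (conormalRows p i₀ lam N).length

/-- `ẽ_{i₀}^r λ`: remove the bottom `r` `i₀`-normal nodes of `λ`. -/
def etilde (p : ℕ) (i₀ : ZMod p) (lam : ℕ → ℕ) (N r : ℕ) : ℕ → ℕ :=
  fun k => if k ∈ (normalRows p i₀ lam N).take r then lam k - 1 else lam k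

/-- `f̃_{i₀}^r λ`: add the top `r` `i₀`-conormal nodes of `λ`. -/
def ftilde (p : ℕ) (i₀ : ZMod p) (lam : ℕ → ℕ) (N r : ℕ) : ℕ → ℕ :=
  fun k =>
    if k ∈ ((conormalRows p i₀ lam N).reverse).take r then lam k + 1 else lam k

/-- A partition is `p`-regular if no (positive) part is repeated `p` or more
times. -/
def PRegular (p : ℕ) (lam : ℕ → ℕ) : Prop :=
  ∀ k : ℕ, 0 < lam (k + (p - 1)) → lam (k + (p - 1)) < lam k

lemma reduceStep_false (st : List (Bool × ℕ)) (t : ℕ) :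
    reduceStep st (false, t) = (false, t) :: st := by
  cases st with
  | nil => rfl
  | cons a l => rcases a with ⟨b, u⟩; cases b <;> rfl

lemma reduceStep_subset (st : List (Bool × ℕ)) (x : Bool × ℕ) :
    ∀ a ∈ reduceStep st x, a ∈ x :: st := by
  intro a ha
  rcases x with ⟨b, t⟩
  cases b
  · rw [reduceStep_false] at ha; exact ha
  · cases st with
    | nil => exact ha
    | cons y l =>
      rcases y with ⟨b', u⟩
      cases b'
      · simp only [reduceStep] at ha
        simp [ha]
      · exact ha

lemma mem_foldl {l : List (Bool × ℕ)} :
    ∀ st a, a ∈ l.foldl reduceStep st → a ∈ st ∨ a ∈ l := by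
  induction l with
  | nil => intro st a h; exact Or.inl h
  | cons x l ih =>
    intro st a h
    rcases ih _ a h with h' | h'
    · rcases List.mem_cons.mp (reduceStep_subset st x a h') with h2 | h2
      · exact Or.inr (by simp [h2])
      · exact Or.inl h2
    · exact Or.inr (List.mem_cons_of_mem _ h')

lemma reduceStep_true_false (u t : ℕ) (rest : List (Bool × ℕ)) :
    reduceStep ((false, u) :: rest) (true, t) = rest := rfl

lemma reduceStep_true_true (u t : ℕ) (rest : List (Bool × ℕ)) :
    reduceStep ((true, u) :: rest) (true, t) = (true, t) :: (true, u) :: rest := rfl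

lemma stack_lemma (k s : ℕ) (hks : s ≠ k) :
    ∀ (l : List (Bool × ℕ)), (∀ x ∈ l, x.2 ≠ k) →
    ∀ (A st : List (Bool × ℕ)), (∀ x ∈ st, x.2 ≠ k) →
    (∃ A', l.foldl reduceStep (A ++ (false, k) :: (false, s) :: st) =
        A' ++ (false, k) :: (false, s) :: st) ∨
    (false, k) ∉ l.foldl reduceStep (A ++ (false, k) :: (false, s) :: st) := by
  intro l
  induction l with
  | nil => intro _ A st _; exact Or.inl ⟨A, rfl⟩
  | cons x l ih =>
    intro hl A st hst
    rcases x with ⟨b, t⟩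
    have hl' : ∀ x ∈ l, x.2 ≠ k := fun x hx => hl x (List.mem_cons_of_mem _ hx)
    simp only [List.foldl_cons]
    cases b with
    | false =>
      rw [reduceStep_false]
      exact ih hl' ((false, t) :: A) st hst
    | true =>
      cases A with
      | nil =>
        simp only [List.nil_append, reduceStep_true_false]
        right
        intro hmem
        rcases mem_foldl _ _ hmem with h | h
        · rcases List.mem_cons.mp h with h | h
          · exact hks (by injection h with _ h2; exact h2.symm)
          · exact hst _ h rfl
        · exact hl' _ h rfl
      | cons y A' =>
        rcases y with ⟨b', u⟩
        cases b' with
        | false =>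
          simp only [List.cons_append, reduceStep_true_false]
          exact ih hl' A' st hst
        | true =>
          simp only [List.cons_append, reduceStep_true_true]
          exact ih hl' ((true, t) :: (true, u) :: A') st hst

lemma take_lemma (k s : ℕ) (hks : k ≠ s) :
    ∀ (P : List ℕ) (r : ℕ) (Q : List ℕ), k ∉ P →
      k ∈ (P ++ s :: k :: Q).take r → s ∈ (P ++ s :: k :: Q).take r := by
  intro P
  induction P with
  | nil =>
    intro r Q _ hk
    cases r with
    | zero => simp at hk
    | succ r => simp
  | cons a P ih =>
    intro r Q hkP hk
    cases r with
    | zero => simp at hk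
    | succ r =>
      simp only [List.cons_append, List.take_succ_cons, List.mem_cons] at hk ⊢
      rcases hk with h | h
      · subst h; exact (hkP List.mem_cons_self).elim
      · exact Or.inr (ih r Q (fun h => hkP (List.mem_cons_of_mem _ h)) h)

lemma rowEntry_snd {p : ℕ} {i₀ : ZMod p} {lam : ℕ → ℕ} {j : ℕ} {x : Bool × ℕ}
    (h : rowEntry p i₀ lam j = some x) : x.2 = j := by
  unfold rowEntry at h
  split at h
  · injection h with h; subst h; rfl
  · split at h
    · injection h with h; subst h; rfl
    · exact absurd h (by simp)

lemma rowEntry_false {p : ℕ} {i₀ : ZMod p} {lam : ℕ → ℕ} {j j' : ℕ}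
    (h : rowEntry p i₀ lam j = some (false, j')) :
    lam (j + 1) < lam j ∧ (lam j : ZMod p) - (j + 1) = i₀ := by
  unfold rowEntry at h
  split at h
  · simp at h
  · split at h
    · assumption
    · simp at h

lemma rowEntry_eq_none {p : ℕ} {i₀ : ZMod p} {lam : ℕ → ℕ} {j : ℕ}
    (h1 : ¬ ((lam j : ZMod p) + 1 - (j + 1) = i₀))
    (h2 : ¬ (lam (j + 1) < lam j)) : rowEntry p i₀ lam j = none := by
  unfold rowEntry
  rw [if_neg (fun h => h1 h.2), if_neg (fun h => h2 h.1)]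

lemma rowEntry_eq_some_false {p : ℕ} {i₀ : ZMod p} {lam : ℕ → ℕ} {j : ℕ}
    (h1 : ¬ ((lam j : ZMod p) + 1 - (j + 1) = i₀))
    (h2 : lam (j + 1) < lam j) (h3 : (lam j : ZMod p) - (j + 1) = i₀) :
    rowEntry p i₀ lam j = some (false, j) := by
  unfold rowEntry
  rw [if_neg (fun h => h1 h.2), if_pos ⟨h2, h3⟩]

lemma mem_normalRows {p : ℕ} {i₀ : ZMod p} {lam : ℕ → ℕ} {N k : ℕ}
    (h : k ∈ normalRows p i₀ lam N) :
    rowEntry p i₀ lam k = some (false, k) := by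
  unfold normalRows at h
  rcases List.mem_map.mp h with ⟨x, hx, hxk⟩
  rcases List.mem_filter.mp hx with ⟨hx1, hx2⟩
  have hxf : x.1 = false := by simpa using hx2
  have hx' : x = (false, k) := by
    rcases x with ⟨b, t⟩; simp at hxf hxk; simp [hxf, hxk]
  subst hx'
  have hmem : (false, k) ∈ (signature p i₀ lam N).foldl reduceStep [] := by
    unfold reducedSig at hx1
    exact List.mem_reverse.mp hx1
  rcases mem_foldl _ _ hmem with h | h
  · simp at h
  · unfold signature at h
    rcases List.mem_filterMap.mp h with ⟨j, _, hj⟩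
    have hkj : k = j := rowEntry_snd hj
    subst hkj
    exact hj

lemma mem_reducedSig_of_mem_normalRows {p : ℕ} {i₀ : ZMod p} {lam : ℕ → ℕ} {N k : ℕ}
    (h : k ∈ normalRows p i₀ lam N) :
    (false, k) ∈ (signature p i₀ lam N).foldl reduceStep [] := by
  unfold normalRows at h
  rcases List.mem_map.mp h with ⟨x, hx, hxk⟩
  rcases List.mem_filter.mp hx with ⟨hx1, hx2⟩
  have hxf : x.1 = false := by simpa using hx2
  have hx' : x = (false, k) := by
    rcases x with ⟨b, t⟩; simp at hxf hxk; simp [hxf, hxk]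
  subst hx'
  unfold reducedSig at hx1
  exact List.mem_reverse.mp hx1

lemma key (p : ℕ) (hp : 2 ≤ p) (i₀ : ZMod p) (lam : ℕ → ℕ)
    (hanti : Antitone lam) (N : ℕ) (hN : ∀ m, N ≤ m → lam m = 0)
    (hreg : PRegular p lam) (r k : ℕ)
    (hk : k ∈ (normalRows p i₀ lam N).take r)
    (hspos : 0 < lam (k + (p - 1)))
    (hval : lam (k + (p - 1)) = lam k - 1) :
    k + (p - 1) ∈ (normalRows p i₀ lam N).take r := by
  haveI : NeZero p := ⟨by omega⟩
  haveI : Fact (1 < p) := ⟨by omega⟩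
  set s := k + (p - 1) with hs
  have hkN : k ∈ normalRows p i₀ lam N := List.mem_of_mem_take hk
  have re_k := mem_normalRows hkN
  obtain ⟨hk1, hk2⟩ := rowEntry_false re_k
  have ha : 0 < lam k := by omega
  -- middle rows all equal lam k - 1
  have hmid : ∀ j, k + 1 ≤ j → j ≤ s → lam j = lam k - 1 := by
    intro j h1 h2
    have e1 : lam j ≤ lam (k + 1) := hanti h1
    have e2 : lam s ≤ lam j := hanti h2
    omega
  -- the row below s is strictly smaller
  have hs1 : lam (s + 1) < lam s := by
    by_contra hcon
    have e0 : lam (s + 1) ≤ lam s := hanti (by omega)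
    have e1 : lam (s + 1) = lam s := by omega
    have e2 : k + 1 + (p - 1) = s + 1 := by omega
    have e3 := hreg (k + 1)
    rw [e2] at e3
    have e4 := hmid (k + 1) (by omega) (by omega)
    omega
  have hsN : s < N := by
    by_contra hcon
    have := hN s (by omega)
    omega
  -- casts
  have hp0 : ((p : ℕ) : ZMod p) = 0 := ZMod.natCast_self p
  have hcast : ((lam s : ℕ) : ZMod p) = (lam k : ZMod p) - 1 := by
    rw [hval, Nat.cast_sub ha, Nat.cast_one]
  have hscast : ((s : ℕ) : ZMod p) = (k : ZMod p) - 1 := by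
    rw [hs]
    push_cast [Nat.cast_sub (by omega : 1 ≤ p)]
    rw [hp0]; ring
  -- rowEntry at s
  have re_s : rowEntry p i₀ lam s = some (false, s) := by
    apply rowEntry_eq_some_false
    · intro h
      rw [hcast, hscast] at h
      have : (1 : ZMod p) = 0 := by linear_combination h - hk2
      exact one_ne_zero this
    · exact hs1
    · rw [hcast, hscast]; linear_combination hk2
  -- middle rows contribute nothing
  have hmidnone : ∀ j ∈ List.range' (k + 1) (p - 2), rowEntry p i₀ lam j = none := by
    intro j hj
    rcases List.mem_range'.mp hj with ⟨m, hm, rfl⟩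
    apply rowEntry_eq_none
    · intro h
      have hcastj : ((lam (k + 1 + 1 * m) : ℕ) : ZMod p) = (lam k : ZMod p) - 1 := by
        rw [hmid _ (by omega) (by omega), Nat.cast_sub ha, Nat.cast_one]
      rw [hcastj] at h
      push_cast at h
      have hm0 : ((m + 1 : ℕ) : ZMod p) = 0 := by
        push_cast
        linear_combination hk2 - h
      rw [ZMod.natCast_eq_zero_iff] at hm0
      have := Nat.le_of_dvd (by omega) hm0
      omega
    · have e1 := hmid (k + 1 + 1 * m) (by omega) (by omega)
      have e2 := hmid (k + 1 + 1 * m + 1) (by omega) (by omega)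
      omega
  -- decomposition of the range
  have hrange : List.range (N + 1) =
      ((((List.range' 0 k ++ List.range' k 1) ++ List.range' (k + 1) (p - 2)) ++
        List.range' (k + 1 + (p - 2)) 1) ++
        List.range' (k + 1 + (p - 2) + 1) (N - (k + 1 + (p - 2)))) := by
    have h1 : List.range' 0 k ++ List.range' k 1 = List.range' 0 (k + 1) := by
      have h := List.range'_append_1 (s := 0) (m := k) (n := 1)
      simp only [Nat.zero_add] at h
      rw [h]
    have h2 : List.range' 0 (k + 1) ++ List.range' (k + 1) (p - 2) =
        List.range' 0 (k + 1 + (p - 2)) := by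
      have h := List.range'_append_1 (s := 0) (m := k + 1) (n := p - 2)
      simp only [Nat.zero_add] at h
      rw [h]
    have h3 : List.range' 0 (k + 1 + (p - 2)) ++ List.range' (k + 1 + (p - 2)) 1 =
        List.range' 0 (k + 1 + (p - 2) + 1) := by
      have h := List.range'_append_1 (s := 0) (m := k + 1 + (p - 2)) (n := 1)
      simp only [Nat.zero_add] at h
      rw [h]
    have h4 : List.range' 0 (k + 1 + (p - 2) + 1) ++
        List.range' (k + 1 + (p - 2) + 1) (N - (k + 1 + (p - 2))) =
        List.range' 0 (k + 1 + (p - 2) + 1 + (N - (k + 1 + (p - 2)))) := by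
      have h := List.range'_append_1 (s := 0) (m := k + 1 + (p - 2) + 1) (n := N - (k + 1 + (p - 2)))
      simp only [Nat.zero_add] at h
      rw [h]
    rw [List.range_eq_range',
      show N + 1 = k + 1 + (p - 2) + 1 + (N - (k + 1 + (p - 2))) from by omega,
      ← h4, ← h3, ← h2, ← h1]
  have hsK : s = k + 1 + (p - 2) := by omega
  set f := rowEntry p i₀ lam with hf
  set L1 := ((List.range' (s + 1) (N - s)).reverse).filterMap f with hL1
  set L2 := ((List.range' 0 k).reverse).filterMap f with hL2
  have hmidnil : ((List.range' (k + 1) (p - 2)).reverse).filterMap f = [] :=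
    List.filterMap_eq_nil_iff.mpr (fun a ha => hmidnone a (List.mem_reverse.mp ha))
  have hsig : signature p i₀ lam N = L1 ++ (false, s) :: (false, k) :: L2 := by
    unfold signature
    rw [hrange, hsK]
    simp only [List.reverse_append, List.filterMap_append, List.range'_one,
      List.reverse_cons, List.reverse_nil, List.nil_append, List.filterMap_cons,
      ← hsK, re_s, re_k, ← hf, hmidnil, hL1, hL2]
    simp
  -- stack argument
  set st1 := L1.foldl reduceStep [] with hst1def
  have hL1snd : ∀ x ∈ L1, s < x.2 := by
    intro x hx
    rw [hL1] at hx
    rcases List.mem_filterMap.mp hx with ⟨j, hj, hje⟩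
    rw [hf] at hje
    have hxj : x.2 = j := rowEntry_snd hje
    rcases List.mem_range'.mp (List.mem_reverse.mp hj) with ⟨i, hi, rfl⟩
    omega
  have hst1 : ∀ x ∈ st1, x.2 ≠ k := by
    intro x hx
    rcases mem_foldl _ _ hx with h | h
    · simp at h
    · have := hL1snd x h; omega
  have hL2snd : ∀ x ∈ L2, x.2 ≠ k := by
    intro x hx
    rw [hL2] at hx
    rcases List.mem_filterMap.mp hx with ⟨j, hj, hje⟩
    rw [hf] at hje
    have hxj : x.2 = j := rowEntry_snd hje
    rcases List.mem_range'.mp (List.mem_reverse.mp hj) with ⟨i, hi, rfl⟩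
    omega
  have hfold : (signature p i₀ lam N).foldl reduceStep [] =
      L2.foldl reduceStep ([] ++ (false, k) :: (false, s) :: st1) := by
    rw [hsig, List.foldl_append]
    simp only [List.foldl_cons, reduceStep_false, List.nil_append, hst1def]
  rcases stack_lemma k s (by omega) L2 hL2snd [] st1 hst1 with ⟨A', hA'⟩ | hnot
  · rw [List.nil_append] at hA'
    have hred : reducedSig (signature p i₀ lam N) =
        st1.reverse ++ (false, s) :: (false, k) :: A'.reverse := by
      unfold reducedSig
      rw [hfold, List.nil_append, hA']
      simp [List.reverse_append]
    have hnr : normalRows p i₀ lam N =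
        ((st1.reverse.filter (fun x => x.1 = false)).map Prod.snd) ++
          s :: k :: ((A'.reverse.filter (fun x => x.1 = false)).map Prod.snd) := by
      unfold normalRows
      rw [hred]
      simp [List.filter_append]
    rw [hnr] at hk ⊢
    apply take_lemma k s (by omega) _ r _ _ hk
    intro hmem
    rcases List.mem_map.mp hmem with ⟨x, hx, hxk⟩
    have hx1 := (List.mem_filter.mp hx).1
    have hxs : x ∈ st1 := List.mem_reverse.mp hx1
    rcases mem_foldl _ _ hxs with h | h
    · simp at h
    · have := hL1snd x h; omega
  · exfalso
    have hm := mem_reducedSig_of_mem_normalRows hkN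
    rw [hfold] at hm
    exact hnot hm

/-- Let `p ≥ 2`, `λ` a `p`-regular partition, `i₀` a
residue mod `p`, and `0 ≤ r ≤ ε_{i₀}(λ)`.  Then the partition `ẽ_{i₀}^r λ`,
obtained from `λ` by removing the bottom `r` `i₀`-normal nodes, is again
`p`-regular. -/
theorem stmt10 (p : ℕ) (hp : 2 ≤ p) (i₀ : ZMod p) (lam : ℕ → ℕ)
    (hanti : Antitone lam) (N : ℕ) (hN : ∀ m, N ≤ m → lam m = 0)
    (hreg : PRegular p lam) (r : ℕ) (hr : r ≤ epsNormal p i₀ lam N) :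
    PRegular p (etilde p i₀ lam N r) := by
  intro k hpos
  simp only [etilde] at hpos ⊢
  by_cases hsmem : k + (p - 1) ∈ (normalRows p i₀ lam N).take r
  · rw [if_pos hsmem] at hpos ⊢
    have h1 : 0 < lam (k + (p - 1)) := by omega
    have h2 := hreg k h1
    by_cases hk : k ∈ (normalRows p i₀ lam N).take r
    · rw [if_pos hk]; omega
    · rw [if_neg hk]; omega
  · rw [if_neg hsmem] at hpos ⊢
    have h2 := hreg k hpos
    by_cases hk : k ∈ (normalRows p i₀ lam N).take r
    · rw [if_pos hk]
      by_cases hval : lam (k + (p - 1)) = lam k - 1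
      · exact absurd (key p hp i₀ lam hanti N hN hreg r k hk hpos hval) hsmem
      · omega
    · rw [if_neg hk]; omega
end

section
/- Let λ be a partition, r a row index, b ≥ 1. Suppose B_1, ..., B_b are removable nodes of λ with B_1 on row r and every B_j on a row ≤ r, and C is an addable node of λ on a row > r. Let D_1, ..., D_{b−1} be any removable nodes of λ. Then the partition μ obtained from λ by removing B_1, ..., B_b and adding C does not dominate the partition ν obtained from λ by removing D_1, ..., D_{b−1}. (Note |μ| = |λ| − b + 1 = |ν|.) -/
/-- Let `λ` be a partition (rows indexed by `0, 1, 2, …`),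
`r` a row index and `b ≥ 1`.  Suppose `B 0, …, B (b-1)` are (the rows of)
distinct removable nodes of `λ` with `B 0` on row `r` and every `B j` on a
row `≤ r`, and `C` is an addable node of `λ` on a row `s > r`.  Let
`D 0, …, D (b-2)` be (the rows of) any distinct removable nodes of `λ`.
Then the partition `μ` obtained from `λ` by removing the nodes `B j` and
adding `C` does not dominate the partition `ν` obtained from `λ` by removing
the nodes `D j`. -/
theorem stmt13 (lam : ℕ → ℕ) (hanti : Antitone lam)
    (Nz : ℕ) (hNz : ∀ m, Nz ≤ m → lam m = 0)
    (r : ℕ) (b : ℕ) (hb : 1 ≤ b)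
    (B : Fin b → ℕ) (hBinj : Function.Injective B)
    (hBrem : ∀ j, lam (B j + 1) < lam (B j))
    (hBr : ∀ j, B j ≤ r) (hB0 : B ⟨0, hb⟩ = r)
    (s : ℕ) (hs : r < s) (hCadd : lam s < lam (s - 1))
    (D : Fin (b - 1) → ℕ) (hDinj : Function.Injective D)
    (hDrem : ∀ j, lam (D j + 1) < lam (D j)) :
    ¬ (∀ t : ℕ,
        (∑ k ∈ Finset.range t,
          (lam k - Set.indicator (Set.range D) (fun _ => 1) k)) ≤
        ∑ k ∈ Finset.range t,
          (lam k + Set.indicator {s} (fun _ => 1) k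
            - Set.indicator (Set.range B) (fun _ => 1) k)) := by
  intro h
  have key := h s
  -- indicators take values 0/1 and lam k ≥ 1 where the indicator is 1
  have hBle : ∀ k ∈ Finset.range s,
      Set.indicator (Set.range B) (fun _ => (1:ℕ)) k ≤ lam k := by
    intro k _
    by_cases hk : k ∈ Set.range B
    · obtain ⟨j, rfl⟩ := hk
      simpa [Set.indicator_of_mem (Set.mem_range_self j)] using
        Nat.one_le_iff_ne_zero.mpr (by have := hBrem j; omega)
    · simp [Set.indicator_of_notMem hk]
  have hDle : ∀ k ∈ Finset.range s,
      Set.indicator (Set.range D) (fun _ => (1:ℕ)) k ≤ lam k := by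
    intro k _
    by_cases hk : k ∈ Set.range D
    · obtain ⟨j, rfl⟩ := hk
      simpa [Set.indicator_of_mem (Set.mem_range_self j)] using
        Nat.one_le_iff_ne_zero.mpr (by have := hDrem j; omega)
    · simp [Set.indicator_of_notMem hk]
  -- the s-indicator vanishes on range s
  have hind_s : ∀ k ∈ Finset.range s,
      Set.indicator {s} (fun _ => (1:ℕ)) k = 0 := by
    intro k hk
    rw [Finset.mem_range] at hk
    exact Set.indicator_of_notMem (by simp; omega) _
  have hμ : (∑ k ∈ Finset.range s,
        (lam k + Set.indicator {s} (fun _ => (1:ℕ)) k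
          - Set.indicator (Set.range B) (fun _ => 1) k))
      = ∑ k ∈ Finset.range s,
        (lam k - Set.indicator (Set.range B) (fun _ => 1) k) := by
    apply Finset.sum_congr rfl
    intro k hk
    rw [hind_s k hk, Nat.add_zero]
  rw [hμ] at key
  rw [Finset.sum_tsub_distrib _ hBle, Finset.sum_tsub_distrib _ hDle] at key
  -- compute indicator sums
  have hindsum : ∀ (n : ℕ) (f : Fin n → ℕ),
      Function.Injective f →
      (∑ k ∈ Finset.range s, Set.indicator (Set.range f) (fun _ => (1:ℕ)) k)
        = ((Finset.range s).filter (· ∈ Set.range f)).card := by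
    intro n f hf
    rw [Finset.card_filter]
    apply Finset.sum_congr rfl
    intro k _
    by_cases hk : k ∈ Set.range f <;> simp [hk]
  have hBsum : (∑ k ∈ Finset.range s,
      Set.indicator (Set.range B) (fun _ => (1:ℕ)) k) = b := by
    rw [hindsum b B hBinj]
    have : (Finset.range s).filter (· ∈ Set.range B)
        = Finset.image B Finset.univ := by
      ext k
      simp only [Finset.mem_filter, Finset.mem_range, Finset.mem_image,
        Finset.mem_univ, true_and, Set.mem_range]
      constructor
      · rintro ⟨_, j, rfl⟩; exact ⟨j, rfl⟩
      · rintro ⟨j, rfl⟩; exact ⟨lt_of_le_of_lt (hBr j) hs, j, rfl⟩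
    rw [this, Finset.card_image_of_injective _ hBinj, Finset.card_univ,
      Fintype.card_fin]
  have hDsum : (∑ k ∈ Finset.range s,
      Set.indicator (Set.range D) (fun _ => (1:ℕ)) k) ≤ b - 1 := by
    rw [hindsum (b-1) D hDinj]
    calc ((Finset.range s).filter (· ∈ Set.range D)).card
        ≤ (Finset.image D Finset.univ).card := by
          apply Finset.card_le_card
          intro k hk
          simp only [Finset.mem_filter, Set.mem_range] at hk
          obtain ⟨_, j, rfl⟩ := hk
          exact Finset.mem_image_of_mem D (Finset.mem_univ j)
      _ ≤ b - 1 := by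
          rw [Finset.card_image_of_injective _ hDinj, Finset.card_univ,
            Fintype.card_fin]
  -- the total sum is at least b
  have hS : b ≤ ∑ k ∈ Finset.range s, lam k := by
    calc b = ∑ k ∈ Finset.image B Finset.univ, 1 := by
          rw [Finset.sum_const, Finset.card_image_of_injective _ hBinj,
            Finset.card_univ, Fintype.card_fin, smul_eq_mul, mul_one]
      _ ≤ ∑ k ∈ Finset.image B Finset.univ, lam k := by
          apply Finset.sum_le_sum
          intro k hk
          simp only [Finset.mem_image] at hk
          obtain ⟨j, _, rfl⟩ := hk
          have := hBrem j; omega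
      _ ≤ ∑ k ∈ Finset.range s, lam k := by
          apply Finset.sum_le_sum_of_subset
          intro k hk
          simp only [Finset.mem_image] at hk
          obtain ⟨j, _, rfl⟩ := hk
          exact Finset.mem_range.mpr (lt_of_le_of_lt (hBr j) hs)
  rw [hBsum] at key
  omega
end
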